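/- (Chain rule.) Let 𝕋 be a time scale, α ∈ (0,1), and t ∈ 𝕋^κ. Assume g : ℝ → ℝ is continuous, the restriction of g to 𝕋 has a fractional derivative L_g of order α at t, and f : ℝ → ℝ is continuously differentiable. Then there exists c in the real interval [t, σ(t)] such that f′(g(c))·L_g is a fractional derivative of order α at t of the composition f ∘ g restricted to 𝕋. -/

import Mathlib

open Real Set Classical

/-- Forward jump operator of a time scale, with the convention `σ t = t`
when `{s ∈ T | t < s}` is empty. -/
noncomputable def tsSigma (T : Set ℝ) (t : ℝ) : ℝ :=
  if ({s | s ∈ T ∧ t < s}).Nonempty then sInf {s | s ∈ T ∧ t < s} else t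

/-- Graininess function `μ t = σ t - t`. -/
noncomputable def tsMu (T : Set ℝ) (t : ℝ) : ℝ :=
  tsSigma T t - t

/-- Backward jump operator, with the convention `ρ t = t`
when `{s ∈ T | s < t}` is empty. -/
noncomputable def tsRho (T : Set ℝ) (t : ℝ) : ℝ :=
  if ({s | s ∈ T ∧ s < t}).Nonempty then sSup {s | s ∈ T ∧ s < t} else t

/-- `T^κ`: `T` with its maximum removed if the maximum exists and is
left-scattered; `T` otherwise. -/
def tsKappa (T : Set ℝ) : Set ℝ :=
  {t | t ∈ T ∧ ¬ (IsGreatest T t ∧ tsRho T t < t)}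

/-- `t` is right-scattered when `σ t > t`. -/
def RightScattered (T : Set ℝ) (t : ℝ) : Prop :=
  t < tsSigma T t

/-- `t` is right-dense when `t < sup T` and `σ t = t`. -/
def RightDense (T : Set ℝ) (t : ℝ) : Prop :=
  (∃ s ∈ T, t < s) ∧ tsSigma T t = t

/-- Signed real power `x^α = sign(x) · |x|^α` (agrees with `rpow` for `x ≥ 0`). -/
noncomputable def fpow (α x : ℝ) : ℝ := Real.sign x * |x| ^ α

/-- `α = 1/q` for some odd natural number `q`. -/
def IsOddRecip (α : ℝ) : Prop := ∃ q : ℕ, Odd q ∧ α = 1 / (q : ℝ)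

/-- `L` is a fractional derivative of `f` of order `α` at `t` on the time scale `T`. -/
def FracDerivAt (T : Set ℝ) (f : ℝ → ℝ) (α t L : ℝ) : Prop :=
  (IsOddRecip α →
    ∀ ε > (0:ℝ), ∃ δ > (0:ℝ), ∀ s ∈ T, |t - s| < δ →
      |(f (tsSigma T t) - f s) - L * fpow α (tsSigma T t - s)|
        ≤ ε * |tsSigma T t - s| ^ α) ∧
  (¬ IsOddRecip α →
    ∀ ε > (0:ℝ), ∃ δ > (0:ℝ), ∀ s ∈ T, t - δ < s → s < t →
      |(f (tsSigma T t) - f s) - L * fpow α (tsSigma T t - s)|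
        ≤ ε * |tsSigma T t - s| ^ α)

/-- Continuity at `t` of `f` as a function on the time scale `T`. -/
def ContinuousAtTS (T : Set ℝ) (f : ℝ → ℝ) (t : ℝ) : Prop :=
  ∀ ε > (0:ℝ), ∃ δ > (0:ℝ), ∀ s ∈ T, |t - s| < δ → |f t - f s| ≤ ε

/-!
The fractional-derivative condition reads `R =o[l] fun s => |σ t - s| ^ α`, where `R s` is the
remainder `F (σ t) - F s - L * (σ t - s) ^ α` and `l` is the approach filter: two-sided within `T` when
`α = 1/q` with `q` odd, from the left otherwise.

If `σ t = t` this is the classical chain rule: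
`f (g t) - f (g s) = f' (g t) (g t - g s) + o(g t - g s)` and `g t - g s = O(|t - s| ^ α)`.

If `σ t > t`, the weight `|σ t - s| ^ α` tends to `(σ t - t) ^ α > 0`, so for continuous `F` and
nontrivial `l` the condition is equivalent to the single identity
`F (σ t) - F t = L * (σ t - t) ^ α`. The mean value and intermediate value theorems give
`c ∈ [t, σ t]` with `f (g (σ t)) - f (g t) = f' (g c) * (g (σ t) - g t)`, which carries this
identity from `g` to `f ∘ g`. If `l` is trivial there is nothing to prove.
-/

open Filter Topology Asymptotics

lemma eventually_nhdsWithin_iff_abs_sub_lt {S : Set ℝ} {t : ℝ} {p : ℝ → Prop} :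
    (∀ᶠ s in 𝓝[S] t, p s) ↔ ∃ δ > 0, ∀ s ∈ S, |t - s| < δ → p s := by
  simp only [eventually_nhdsWithin_iff, Metric.eventually_nhds_iff, Real.dist_eq, abs_sub_comm]
  exact exists_congr fun _ => and_congr_right fun _ => forall_congr' fun _ => forall_comm

lemma eventually_nhdsWithin_inter_Iio_iff {S : Set ℝ} {t : ℝ} {p : ℝ → Prop} :
    (∀ᶠ s in 𝓝[S ∩ Iio t] t, p s) ↔ ∃ δ > 0, ∀ s ∈ S, t - δ < s → s < t → p s := by
  rw [eventually_nhdsWithin_iff_abs_sub_lt]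
  refine exists_congr fun δ => and_congr_right fun _ => forall_congr' fun s => ?_
  simp only [mem_inter_iff, mem_Iio, and_imp]
  refine forall_congr' fun _ => ⟨fun H h₁ h₂ => H h₂ ?_, fun H h₂ h₁ => H ?_ h₂⟩
  · rw [abs_of_pos (sub_pos.2 h₂)]
    linarith
  · rw [abs_of_pos (sub_pos.2 h₂)] at h₁
    linarith

noncomputable def fracFilter (T : Set ℝ) (α t : ℝ) : Filter ℝ :=
  if IsOddRecip α then 𝓝[T] t else 𝓝[T ∩ Iio t] t

lemma fracFilter_le_nhds (T : Set ℝ) (α t : ℝ) : fracFilter T α t ≤ 𝓝 t := by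
  unfold fracFilter; split_ifs <;> exact nhdsWithin_le_nhds

lemma fracDerivAt_iff_isLittleO {T : Set ℝ} {F : ℝ → ℝ} {α t L : ℝ} :
    FracDerivAt T F α t L ↔
      (fun s => F (tsSigma T t) - F s - L * fpow α (tsSigma T t - s))
        =o[fracFilter T α t] fun s => |tsSigma T t - s| ^ α := by
  have hnorm : ∀ s, ‖|tsSigma T t - s| ^ α‖ = |tsSigma T t - s| ^ α := fun s =>
    abs_of_nonneg (rpow_nonneg (abs_nonneg _) _)
  simp only [isLittleO_iff, hnorm]
  by_cases h : IsOddRecip α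
  · simp [FracDerivAt, fracFilter, h, eventually_nhdsWithin_iff_abs_sub_lt]
  · simp [FracDerivAt, fracFilter, h, eventually_nhdsWithin_inter_Iio_iff]

lemma abs_fpow_le (α x : ℝ) : |fpow α x| ≤ |x| ^ α := by
  have hsign : |Real.sign x| ≤ 1 := by
    rcases Real.sign_apply_eq x with h | h | h <;> simp [h]
  rw [fpow, abs_mul, abs_of_nonneg (rpow_nonneg (abs_nonneg x) α)]
  exact mul_le_of_le_one_left (rpow_nonneg (abs_nonneg x) α) hsign

lemma isBigO_fpow {ι : Type*} {l : Filter ι} (α : ℝ) (u : ι → ℝ) :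
    (fun s => fpow α (u s)) =O[l] fun s => |u s| ^ α :=
  .of_bound 1 <| .of_forall fun s => by
    simpa [abs_of_nonneg (rpow_nonneg (abs_nonneg (u s)) α)] using abs_fpow_le α (u s)

lemma le_tsSigma (T : Set ℝ) (t : ℝ) : t ≤ tsSigma T t := by
  unfold tsSigma
  split_ifs with h
  · exact le_csInf h fun _ hs => hs.2.le
  · exact le_rfl

theorem HasDerivAt.isLittleO_comp_of_isLittleO {ι : Type*} {l : Filter ι} {f : ℝ → ℝ}
    {g u W : ι → ℝ} {f' L y : ℝ} (hf : HasDerivAt f f' y) (hg : Tendsto g l (𝓝 y))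
    (hu : u =O[l] W) (h : (fun s => y - g s - L * u s) =o[l] W) :
    (fun s => f y - f (g s) - f' * L * u s) =o[l] W := by
  have hgy : (fun s => g s - y) =O[l] W := by
    refine (h.isBigO.add (hu.const_mul_left L)).neg_left.congr_left fun s => ?_
    ring
  have hfg : (fun s => f (g s) - f y - (g s - y) • f') =o[l] W :=
    (hf.isLittleO.comp_tendsto hg).trans_isBigO hgy
  refine (hfg.neg_left.add (h.const_mul_left f')).congr_left fun s => ?_
  simp only [smul_eq_mul]
  ring

lemma exists_mem_uIcc_sub_eq_deriv_mul {f : ℝ → ℝ} (hf : Differentiable ℝ f) (x y : ℝ) :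
    ∃ ξ ∈ uIcc x y, f y - f x = deriv f ξ * (y - x) := by
  rcases lt_trichotomy x y with hxy | rfl | hxy
  · obtain ⟨ξ, hξ, hd⟩ := exists_deriv_eq_slope f hxy hf.continuous.continuousOn hf.differentiableOn
    refine ⟨ξ, Icc_subset_uIcc (Ioo_subset_Icc_self hξ), ?_⟩
    rw [hd, div_mul_cancel₀ _ (sub_ne_zero.2 hxy.ne')]
  · exact ⟨x, left_mem_uIcc, by ring⟩
  · obtain ⟨ξ, hξ, hd⟩ := exists_deriv_eq_slope f hxy hf.continuous.continuousOn hf.differentiableOn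
    refine ⟨ξ, Icc_subset_uIcc' (Ioo_subset_Icc_self hξ), ?_⟩
    rw [hd, div_mul_eq_mul_div, eq_div_iff (sub_ne_zero.2 hxy.ne')]
    ring

lemma exists_mem_Icc_sub_comp_eq_deriv_mul {f g : ℝ → ℝ} {a b : ℝ} (hf : Differentiable ℝ f)
    (hg : ContinuousOn g (Icc a b)) (hab : a ≤ b) :
    ∃ c ∈ Icc a b, f (g b) - f (g a) = deriv f (g c) * (g b - g a) := by
  obtain ⟨ξ, hξ, hmvt⟩ := exists_mem_uIcc_sub_eq_deriv_mul hf (g a) (g b)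
  rw [← uIcc_of_le hab] at hg
  obtain ⟨c, hc, rfl⟩ := intermediate_value_uIcc hg hξ
  exact ⟨c, uIcc_of_le hab ▸ hc, hmvt⟩

section RightScattered

variable {F : ℝ → ℝ} {σ t α K : ℝ}

lemma tendsto_sub_sub_mul_fpow (hts : t < σ) (hF : ContinuousAt F t) :
    Tendsto (fun s => F σ - F s - K * fpow α (σ - s)) (𝓝 t)
      (𝓝 (F σ - F t - K * (σ - t) ^ α)) := by
  have hpow : ContinuousAt (fun s => (σ - s) ^ α) t :=
    (continuous_const.sub continuous_id).continuousAt.rpow_const (Or.inl (sub_ne_zero.2 hts.ne'))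
  refine (tendsto_const_nhds.sub hF |>.sub (hpow.const_mul K)).congr' ?_
  filter_upwards [Iio_mem_nhds hts] with s hs
  rw [fpow, Real.sign_of_pos (sub_pos.2 hs), one_mul, abs_of_pos (sub_pos.2 hs)]

lemma tendsto_abs_sub_rpow (hts : t < σ) :
    Tendsto (fun s => |σ - s| ^ α) (𝓝 t) (𝓝 (|σ - t| ^ α)) :=
  ((continuous_const.sub continuous_id).abs.continuousAt.rpow_const
    (Or.inl (abs_pos.2 (sub_ne_zero.2 hts.ne')).ne')).tendsto

lemma abs_sub_rpow_ne_zero (hts : t < σ) : |σ - t| ^ α ≠ 0 :=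
  (rpow_pos_of_pos (abs_pos.2 (sub_ne_zero.2 hts.ne')) α).ne'

lemma sub_eq_mul_rpow_of_isLittleO (hts : t < σ) (hF : ContinuousAt F t) {l : Filter ℝ}
    [l.NeBot] (hl : l ≤ 𝓝 t)
    (h : (fun s => F σ - F s - K * fpow α (σ - s)) =o[l] fun s => |σ - s| ^ α) :
    F σ - F t = K * (σ - t) ^ α :=
  sub_eq_zero.1 <| tendsto_nhds_unique ((tendsto_sub_sub_mul_fpow hts hF).mono_left hl)
    (h.tendsto_zero_of_tendsto ((tendsto_abs_sub_rpow hts).mono_left hl))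

lemma isLittleO_of_sub_eq_mul_rpow (hts : t < σ) (hF : ContinuousAt F t)
    (h : F σ - F t = K * (σ - t) ^ α) :
    (fun s => F σ - F s - K * fpow α (σ - s)) =o[𝓝 t] fun s => |σ - s| ^ α := by
  have hW := tendsto_abs_sub_rpow (α := α) hts
  have hw := abs_sub_rpow_ne_zero (α := α) hts
  refine isLittleO_of_tendsto' ((hW.eventually_ne hw).mono fun _ hne hzero => absurd hzero hne) ?_
  simpa [h, Pi.div_def] using (tendsto_sub_sub_mul_fpow (K := K) (α := α) hts hF).div hW hw

end RightScattered

theorem fracDeriv_chain_general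
    (T : Set ℝ) (α : ℝ) (t : ℝ)
    (g : ℝ → ℝ) (hgc : Continuous g) (Lg : ℝ)
    (hg : FracDerivAt T g α t Lg)
    (f : ℝ → ℝ) (hf : ContDiff ℝ 1 f) :
    ∃ c ∈ Set.Icc t (tsSigma T t),
      FracDerivAt T (f ∘ g) α t (deriv f (g c) * Lg) := by
  have hfd : Differentiable ℝ f := hf.differentiable one_ne_zero
  have hl := fracFilter_le_nhds T α t
  simp only [fracDerivAt_iff_isLittleO, Function.comp_apply] at hg ⊢
  rcases (le_tsSigma T t).eq_or_lt with hσ | hσ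
  · refine ⟨t, ⟨le_rfl, hσ.le⟩, ?_⟩
    rw [← hσ] at hg ⊢
    exact (hfd (g t)).hasDerivAt.isLittleO_comp_of_isLittleO (hgc.continuousAt.tendsto.mono_left hl)
      (isBigO_fpow α _) hg
  rcases (fracFilter T α t).eq_or_neBot with hbot | hne
  · exact ⟨t, ⟨le_rfl, hσ.le⟩, hbot ▸ isLittleO_bot _ _⟩
  have hgσ := sub_eq_mul_rpow_of_isLittleO hσ hgc.continuousAt hl hg
  obtain ⟨c, hc, hmvt⟩ := exists_mem_Icc_sub_comp_eq_deriv_mul hfd hgc.continuousOn hσ.le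
  refine ⟨c, hc, (isLittleO_of_sub_eq_mul_rpow hσ (hf.continuous.comp hgc).continuousAt ?_).mono hl⟩
  rw [Function.comp_apply, Function.comp_apply, hmvt, hgσ]
  ring

/-- Chain rule: if `g : ℝ → ℝ` is continuous, `g` (restricted to `T`) has fractional
derivative `L_g` of order `α ∈ (0,1)` at `t ∈ T^κ`, and `f : ℝ → ℝ` is continuously
differentiable, then there is `c ∈ [t, σ t]` such that `f'(g c)·L_g` is a fractional
derivative of `f ∘ g` of order `α` at `t`. -/
theorem fracDeriv_chain
    (T : Set ℝ) (hT : T.Nonempty) (hTc : IsClosed T)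
    (α : ℝ) (hα : α ∈ Set.Ioo (0:ℝ) 1)
    (t : ℝ) (ht : t ∈ tsKappa T)
    (g : ℝ → ℝ) (hgc : Continuous g) (Lg : ℝ)
    (hg : FracDerivAt T g α t Lg)
    (f : ℝ → ℝ) (hf : ContDiff ℝ 1 f) :
    ∃ c ∈ Set.Icc t (tsSigma T t),
      FracDerivAt T (f ∘ g) α t (deriv f (g c) * Lg) :=
  fracDeriv_chain_general T α t g hgc Lg hg f hf
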